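/- arXiv:2111.03165 — 3 statements merged into one kernel-verified Lean document; each statement's English description precedes it below -/
import Mathlib

section
/- Let x ∈ ℝⁿ with x ≥ 0 componentwise, and let M be an m×n real matrix, m a vector in ℝᵐ, and ε ≥ 0. For any vector y ∈ ℝᵐ satisfying (M - ε·𝟙)x + (m - ε·𝟙) ≤ y ≤ (M + ε·𝟙)x + (m + ε·𝟙) componentwise, there exist a matrix W with |W_{ij} - M_{ij}| ≤ ε for all i,j and a vector b with |b_i - m_i| ≤ ε for all i, such that y = W x + b. -/
/-!
Shift every weight and the bias of row `i` by one common amount `δᵢ`. Since `x ≥ 0`, this moves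
the `i`-th output by `δᵢ (∑ⱼ xⱼ + 1)`, and letting `δᵢ` run through `[-ε, ε]` sweeps out exactly
the interval between the `i`-th lower and upper bounds.
-/

open Matrix

theorem const_dotProduct {ι R : Type*} [Fintype ι] [CommSemiring R] (c : R) (x : ι → R) :
    (fun _ => c) ⬝ᵥ x = c * ∑ j, x j := by
  simp [dotProduct, Finset.mul_sum]

theorem of_const_mulVec {κ ι R : Type*} [Fintype ι] [CommSemiring R] (c : R) (x : ι → R) :
    (of fun (_ : κ) (_ : ι) => c) *ᵥ x = fun _ => c * ∑ j, x j :=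
  funext fun _ => const_dotProduct c x

theorem exists_abs_le_eq_mul_of_abs_le {t ε s : ℝ} (hs : 0 < s) (h : |t| ≤ ε * s) :
    ∃ δ, |δ| ≤ ε ∧ t = δ * s :=
  ⟨t / s, by rwa [abs_div, abs_of_pos hs, div_le_iff₀ hs], (div_mul_cancel₀ t hs.ne').symm⟩

theorem exists_abs_le_eq_add_const_dotProduct_add {ι : Type*} [Fintype ι] {r x : ι → ℝ}
    {β ε y : ℝ} (hx : 0 ≤ x) (hlo : r ⬝ᵥ x - ε * ∑ j, x j + (β - ε) ≤ y)
    (hhi : y ≤ r ⬝ᵥ x + ε * ∑ j, x j + (β + ε)) :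
    ∃ δ, |δ| ≤ ε ∧ y = (r + fun _ => δ) ⬝ᵥ x + (β + δ) := by
  have hs : 0 < ∑ j, x j + 1 := by
    linarith [Finset.sum_nonneg fun j (_ : j ∈ Finset.univ) => hx j]
  obtain ⟨δ, hδ, hy⟩ : ∃ δ, |δ| ≤ ε ∧ y - (r ⬝ᵥ x + β) = δ * (∑ j, x j + 1) :=
    exists_abs_le_eq_mul_of_abs_le hs (abs_le.2 ⟨by linarith, by linarith⟩)
  refine ⟨δ, hδ, ?_⟩
  rw [add_dotProduct, const_dotProduct]
  linarith

theorem realizability_nonneg_input_general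
    {m n : ℕ} (M : Matrix (Fin m) (Fin n) ℝ) (mv : Fin m → ℝ) (ε : ℝ)
    (x : Fin n → ℝ) (hx : ∀ j, 0 ≤ x j)
    (y : Fin m → ℝ)
    (hlo : (M - Matrix.of fun _ _ => ε).mulVec x + (mv - fun _ => ε) ≤ y)
    (hhi : y ≤ (M + Matrix.of fun _ _ => ε).mulVec x + (mv + fun _ => ε)) :
    ∃ (W : Matrix (Fin m) (Fin n) ℝ) (b : Fin m → ℝ),
      (∀ i j, |W i j - M i j| ≤ ε) ∧ (∀ i, |b i - mv i| ≤ ε) ∧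
      y = W.mulVec x + b := by
  simp only [sub_mulVec, add_mulVec, of_const_mulVec] at hlo hhi
  choose δ hδ hy using fun i =>
    exists_abs_le_eq_add_const_dotProduct_add (r := M i) (β := mv i) hx (hlo i) (hhi i)
  refine ⟨fun i => M i + fun _ => δ i, mv + δ, fun i j => ?_, fun i => ?_, funext hy⟩ <;>
    simpa using hδ i

theorem realizability_nonneg_input
    {m n : ℕ} (M : Matrix (Fin m) (Fin n) ℝ) (mv : Fin m → ℝ) (ε : ℝ)
    (hε : 0 ≤ ε)
    (x : Fin n → ℝ) (hx : ∀ j, 0 ≤ x j)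
    (y : Fin m → ℝ)
    (hlo : (M - Matrix.of fun _ _ => ε).mulVec x + (mv - fun _ => ε) ≤ y)
    (hhi : y ≤ (M + Matrix.of fun _ _ => ε).mulVec x + (mv + fun _ => ε)) :
    ∃ (W : Matrix (Fin m) (Fin n) ℝ) (b : Fin m → ℝ),
      (∀ i j, |W i j - M i j| ≤ ε) ∧ (∀ i, |b i - mv i| ≤ ε) ∧
      y = W.mulVec x + b :=
  realizability_nonneg_input_general M mv ε x hx y hlo hhi
end

section
/- Let x ∈ ℝⁿ be arbitrary (no sign assumption), x⁺ = max(x,0) and x⁻ = min(x,0) componentwise, M an m×n matrix, m ∈ ℝᵐ, ε ≥ 0. For any y ∈ ℝᵐ with (M - ε·𝟙)x⁺ + (M + ε·𝟙)x⁻ + (m - ε·𝟙) ≤ y ≤ (M + ε·𝟙)x⁺ + (M - ε·𝟙)x⁻ + (m + ε·𝟙), there exist W with |W_{ij} - M_{ij}| ≤ ε and b with |b_i - m_i| ≤ ε such that y = W x + b. -/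
/-!
Write `‖x‖₁ = ∑ⱼ |xⱼ|`. Splitting `x = x⁺ + x⁻` shows that the two bounds on `y` are exactly
`M x + mv ∓ ε (‖x‖₁ + 1)`, so `y - (M x + mv) = (‖x‖₁ + 1) t` with `|tᵢ| ≤ ε`. The rank-one
perturbation `W = M + t sign(x)ᵀ`, `b = mv + t` stays in the weight box and moves `M x + mv` by
`t ‖x‖₁ + t`, which is exactly the required offset.
-/

open Matrix

section
variable {ι κ : Type*} [Fintype κ]

lemma add_mul_max_add_sub_mul_min (a c t : ℝ) :
    (a + c) * max t 0 + (a - c) * min t 0 = a * t + c * |t| := by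
  rcases le_total 0 t with h | h
  · simp only [max_eq_left h, min_eq_right h, abs_of_nonneg h]; ring
  · simp only [max_eq_right h, min_eq_left h, abs_of_nonpos h]; ring

theorem add_const_mulVec_max_add_sub_const_mulVec_min (M : Matrix ι κ ℝ) (c : ℝ) (x : κ → ℝ) :
    (M + of fun _ _ => c) *ᵥ (fun j => max (x j) 0) +
        (M - of fun _ _ => c) *ᵥ (fun j => min (x j) 0) =
      M *ᵥ x + fun _ => c * ∑ j, |x j| := by
  ext i
  simp only [Pi.add_apply, mulVec, dotProduct, Matrix.add_apply, Matrix.sub_apply, of_apply,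
    ← Finset.sum_add_distrib, Finset.mul_sum, add_mul_max_add_sub_mul_min]

theorem sub_const_mulVec_max_add_add_const_mulVec_min (M : Matrix ι κ ℝ) (c : ℝ) (x : κ → ℝ) :
    (M - of fun _ _ => c) *ᵥ (fun j => max (x j) 0) +
        (M + of fun _ _ => c) *ᵥ (fun j => min (x j) 0) =
      M *ᵥ x - fun _ => c * ∑ j, |x j| := by
  have hneg : (of fun _ _ => -c : Matrix ι κ ℝ) = -of fun _ _ => c := rfl
  rw [← sub_neg_eq_add M, ← hneg, sub_eq_add_neg M, ← hneg,
    add_const_mulVec_max_add_sub_const_mulVec_min]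
  ext; simp [sub_eq_add_neg]

theorem exists_mulVec_add_eq_of_abs_sub_le (M : Matrix ι κ ℝ) (mv : ι → ℝ) (x : κ → ℝ)
    (y : ι → ℝ) {ε : ℝ} (hy : ∀ i, |y i - (M *ᵥ x + mv) i| ≤ ε * (∑ j, |x j| + 1)) :
    ∃ (W : Matrix ι κ ℝ) (b : ι → ℝ),
      (∀ i j, |W i j - M i j| ≤ ε) ∧ (∀ i, |b i - mv i| ≤ ε) ∧ y = W *ᵥ x + b := by
  set S := ∑ j, |x j| + 1 with hS_def
  have hS : 0 < S := by positivity
  set t : ι → ℝ := fun i => (y i - (M *ᵥ x + mv) i) / S with ht_def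
  have ht : ∀ i, |t i| ≤ ε := fun i => by
    rw [ht_def, abs_div, abs_of_pos hS, div_le_iff₀ hS]; exact hy i
  have hsign_le : ∀ a : ℝ, |(SignType.sign a : ℝ)| ≤ 1 := fun a => by
    cases SignType.sign a <;> simp
  have hsign_dot : (fun j => (SignType.sign (x j) : ℝ)) ⬝ᵥ x = ∑ j, |x j| := by
    simp [dotProduct]
  refine ⟨M + vecMulVec t (fun j => SignType.sign (x j)), mv + t, fun i j => ?_,
    fun i => by simpa using ht i, ?_⟩
  · simp only [Matrix.add_apply, vecMulVec_apply, add_sub_cancel_left, abs_mul]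
    exact (mul_le_of_le_one_right (abs_nonneg _) (hsign_le _)).trans (ht i)
  · ext i
    have hti : t i * S = y i - (M *ᵥ x + mv) i := div_mul_cancel₀ _ hS.ne'
    simp only [add_mulVec, vecMulVec_mulVec, hsign_dot, Pi.add_apply, Pi.smul_apply,
      op_smul_eq_smul, smul_eq_mul] at hti ⊢
    linear_combination -hti + t i * hS_def
end

theorem realizability_arbitrary_input_general
    {m n : ℕ} (M : Matrix (Fin m) (Fin n) ℝ) (mv : Fin m → ℝ) (ε : ℝ)
    (x : Fin n → ℝ)
    (xpos xneg : Fin n → ℝ)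
    (hpos : xpos = fun j => max (x j) 0)
    (hneg : xneg = fun j => min (x j) 0)
    (y : Fin m → ℝ)
    (hlo : (M - Matrix.of fun _ _ => ε).mulVec xpos +
             (M + Matrix.of fun _ _ => ε).mulVec xneg + (mv - fun _ => ε) ≤ y)
    (hhi : y ≤ (M + Matrix.of fun _ _ => ε).mulVec xpos +
             (M - Matrix.of fun _ _ => ε).mulVec xneg + (mv + fun _ => ε)) :
    ∃ (W : Matrix (Fin m) (Fin n) ℝ) (b : Fin m → ℝ),
      (∀ i j, |W i j - M i j| ≤ ε) ∧ (∀ i, |b i - mv i| ≤ ε) ∧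
      y = W.mulVec x + b := by
  subst hpos hneg
  refine exists_mulVec_add_eq_of_abs_sub_le M mv x y fun i => abs_sub_le_iff.2 ⟨?_, ?_⟩
  · have hhi_i := hhi i
    have hsplit := congrFun (add_const_mulVec_max_add_sub_const_mulVec_min M ε x) i
    simp only [Pi.add_apply] at hhi_i hsplit ⊢
    linarith
  · have hlo_i := hlo i
    have hsplit := congrFun (sub_const_mulVec_max_add_add_const_mulVec_min M ε x) i
    simp only [Pi.add_apply, Pi.sub_apply] at hlo_i hsplit ⊢
    linarith

theorem realizability_arbitrary_input
    {m n : ℕ} (M : Matrix (Fin m) (Fin n) ℝ) (mv : Fin m → ℝ) (ε : ℝ)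
    (hε : 0 ≤ ε)
    (x : Fin n → ℝ)
    (xpos xneg : Fin n → ℝ)
    (hpos : xpos = fun j => max (x j) 0)
    (hneg : xneg = fun j => min (x j) 0)
    (y : Fin m → ℝ)
    (hlo : (M - Matrix.of fun _ _ => ε).mulVec xpos +
             (M + Matrix.of fun _ _ => ε).mulVec xneg + (mv - fun _ => ε) ≤ y)
    (hhi : y ≤ (M + Matrix.of fun _ _ => ε).mulVec xpos +
             (M - Matrix.of fun _ _ => ε).mulVec xneg + (mv + fun _ => ε)) :
    ∃ (W : Matrix (Fin m) (Fin n) ℝ) (b : Fin m → ℝ),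
      (∀ i j, |W i j - M i j| ≤ ε) ∧ (∀ i, |b i - mv i| ≤ ε) ∧
      y = W.mulVec x + b :=
  realizability_arbitrary_input_general M mv ε x xpos xneg hpos hneg y hlo hhi
end

section
/- The system of constraints Φ(π, X₀, Xu, ε) is satisfiable if and only if there exists a weight vector (w,b) in the box W^π_ε (each weight within ε of its mean) such that the deterministic ReLU network π_{w,b} maps some input in X₀ to an output in Xu. Equivalently, all networks with weights in the ε-box are safe iff Φ is unsatisfiable. -/
/-- Componentwise ReLU. -/
def relu {k : ℕ} (v : Fin k → ℝ) : Fin k → ℝ := fun i => max (v i) 0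

/-- Pre-activation vector of layer `i+1` of a feed-forward ReLU network with
layer dimensions `d`, weight matrices `W` and bias vectors `b`, on input `x`.
The network has ReLU activations on all hidden layers and an affine output layer. -/
def preact (d : ℕ → ℕ) (W : ∀ i : ℕ, Matrix (Fin (d (i + 1))) (Fin (d i)) ℝ)
    (b : ∀ i : ℕ, Fin (d (i + 1)) → ℝ) (x : Fin (d 0) → ℝ) :
    (i : ℕ) → Fin (d (i + 1)) → ℝ
  | 0 => (W 0).mulVec x + b 0
  | i + 1 => (W (i + 1)).mulVec (relu (preact d W b x i)) + b (i + 1)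

noncomputable def sgn (x : ℝ) : ℝ := if 0 ≤ x then 1 else -1

lemma sgn_mul_self (x : ℝ) : sgn x * x = |x| := by
  unfold sgn
  split
  · rw [one_mul, abs_of_nonneg ‹_›]
  · rw [abs_of_neg (lt_of_not_ge ‹_›)]; ring

lemma abs_sgn (x : ℝ) : |sgn x| = 1 := by
  unfold sgn; split <;> simp

/-- Key row lemma: a value in the interval can be realized exactly. -/
lemma rowlem {n : ℕ} (v Mr : Fin n → ℝ) (mr ε t : ℝ) (hε : 0 ≤ ε)
    (hL : ∑ j, Mr j * v j + mr - (ε * ∑ j, |v j| + ε) ≤ t)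
    (hU : t ≤ ∑ j, Mr j * v j + mr + (ε * ∑ j, |v j| + ε)) :
    ∃ w : Fin n → ℝ, ∃ β : ℝ, (∀ j, |w j - Mr j| ≤ ε) ∧ |β - mr| ≤ ε ∧
      (∑ j, w j * v j) + β = t := by
  set A : ℝ := ∑ j, |v j| with hA
  have hA0 : 0 ≤ A := Finset.sum_nonneg fun j _ => abs_nonneg _
  have hSpos : (0:ℝ) < A + 1 := by linarith
  set δ : ℝ := (t - (∑ j, Mr j * v j + mr)) / (A + 1) with hδ
  have hδle : |δ| ≤ ε := by
    rw [hδ, abs_div, abs_of_pos hSpos, div_le_iff₀ hSpos]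
    rw [abs_le]
    constructor <;> nlinarith
  have hδS : δ * (A + 1) = t - (∑ j, Mr j * v j + mr) := by
    rw [hδ, div_mul_cancel₀ _ (ne_of_gt hSpos)]
  refine ⟨fun j => Mr j + δ * sgn (v j), mr + δ, ?_, ?_, ?_⟩
  · intro j
    have h : |Mr j + δ * sgn (v j) - Mr j| = |δ| := by
      rw [add_sub_cancel_left, abs_mul, abs_sgn, mul_one]
    rw [h]; exact hδle
  · simpa using hδle
  · have hs : ∑ j, (Mr j + δ * sgn (v j)) * v j = ∑ j, Mr j * v j + δ * A := by
      rw [hA, Finset.mul_sum, ← Finset.sum_add_distrib]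
      refine Finset.sum_congr rfl fun j _ => ?_
      rw [add_mul, mul_assoc, sgn_mul_self]
    rw [hs]; linarith [hδS]

/-- Row bounds for weights in the box. -/
lemma row_bounds {n : ℕ} (w Mr v : Fin n → ℝ) (β mr ε : ℝ)
    (hw : ∀ j, |w j - Mr j| ≤ ε) (hβ : |β - mr| ≤ ε) :
    ∑ j, Mr j * v j + mr - (ε * ∑ j, |v j| + ε) ≤ (∑ j, w j * v j) + β ∧
    (∑ j, w j * v j) + β ≤ ∑ j, Mr j * v j + mr + (ε * ∑ j, |v j| + ε) := by
  have h1 : |∑ j, w j * v j - ∑ j, Mr j * v j| ≤ ε * ∑ j, |v j| := by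
    rw [← Finset.sum_sub_distrib, Finset.mul_sum]
    refine (Finset.abs_sum_le_sum_abs _ _).trans (Finset.sum_le_sum fun j _ => ?_)
    rw [← sub_mul, abs_mul]
    exact mul_le_mul_of_nonneg_right (hw j) (abs_nonneg _)
  have h1' := abs_le.mp h1
  have h2 := abs_le.mp hβ
  exact ⟨by linarith [h1'.1, h2.1], by linarith [h1'.2, h2.2]⟩

/-- The input-layer sum identity via the dummy variables. -/
lemma input_row_eq {n : ℕ} (Mr : Fin n → ℝ) (ε : ℝ) (x : Fin n → ℝ) :
    ((∑ j, (Mr j - ε) * max (x j) 0) + ∑ j, (Mr j + ε) * (-(max (-(x j)) 0)))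
      = ∑ j, Mr j * x j - ε * ∑ j, |x j| := by
  rw [← Finset.sum_add_distrib, Finset.mul_sum, ← Finset.sum_sub_distrib]
  refine Finset.sum_congr rfl fun j _ => ?_
  rcases le_total 0 (x j) with h | h
  · rw [max_eq_left h, max_eq_right (neg_nonpos.mpr h), abs_of_nonneg h]; ring
  · rw [max_eq_right h, max_eq_left (neg_nonneg.mpr h), abs_of_nonpos h]; ring

lemma input_row_eq' {n : ℕ} (Mr : Fin n → ℝ) (ε : ℝ) (x : Fin n → ℝ) :
    ((∑ j, (Mr j + ε) * max (x j) 0) + ∑ j, (Mr j - ε) * (-(max (-(x j)) 0)))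
      = ∑ j, Mr j * x j + ε * ∑ j, |x j| := by
  rw [← Finset.sum_add_distrib, Finset.mul_sum, ← Finset.sum_add_distrib]
  refine Finset.sum_congr rfl fun j _ => ?_
  rcases le_total 0 (x j) with h | h
  · rw [max_eq_left h, max_eq_right (neg_nonpos.mpr h), abs_of_nonneg h]; ring
  · rw [max_eq_right h, max_eq_left (neg_nonneg.mpr h), abs_of_nonpos h]; ring

lemma relu_abs {n : ℕ} (v : Fin n → ℝ) (j : Fin n) : |relu v j| = relu v j :=
  abs_of_nonneg (le_max_right _ _)

/-- The constraint system `Φ(π, X₀, Xu, ε)` for a network with `lm + 1` layers is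
satisfiable iff some weight vector in the ε-box around the means yields a network
mapping an input in `X₀` to an output in `Xu`. -/
theorem phi_satisfiable_iff_unsafe_weights
    (lm : ℕ) (d : ℕ → ℕ)
    (M : ∀ i : ℕ, Matrix (Fin (d (i + 1))) (Fin (d i)) ℝ)
    (mv : ∀ i : ℕ, Fin (d (i + 1)) → ℝ)
    (ε : ℝ) (hε : 0 ≤ ε)
    (X0 : Set (Fin (d 0) → ℝ)) (Xu : Set (Fin (d (lm + 1)) → ℝ)) :
    -- Φ is satisfiable:
    (∃ (x0 : Fin (d 0) → ℝ) (xin : ∀ i : ℕ, Fin (d (i + 1)) → ℝ),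
      -- input-output conditions
      x0 ∈ X0 ∧ xin lm ∈ Xu ∧
      -- BNN input layer constraints, with dummies x₀⁺ = ReLU(x₀), x₀⁻ = -ReLU(-x₀)
      ((M 0 - Matrix.of fun _ _ => ε).mulVec (fun j => max (x0 j) 0) +
         (M 0 + Matrix.of fun _ _ => ε).mulVec (fun j => -(max (-(x0 j)) 0)) +
         (mv 0 - fun _ => ε) ≤ xin 0) ∧
      (xin 0 ≤ (M 0 + Matrix.of fun _ _ => ε).mulVec (fun j => max (x0 j) 0) +
         (M 0 - Matrix.of fun _ _ => ε).mulVec (fun j => -(max (-(x0 j)) 0)) +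
         (mv 0 + fun _ => ε)) ∧
      -- BNN hidden layer constraints (with the ReLU encoding x_i^out = ReLU(x_i^in))
      (∀ i < lm,
        ((M (i + 1) - Matrix.of fun _ _ => ε).mulVec (relu (xin i)) +
           (mv (i + 1) - fun _ => ε) ≤ xin (i + 1)) ∧
        (xin (i + 1) ≤ (M (i + 1) + Matrix.of fun _ _ => ε).mulVec (relu (xin i)) +
           (mv (i + 1) + fun _ => ε))))
    ↔
    -- some network with weights in the ε-box is unsafe:
    (∃ (W : ∀ i : ℕ, Matrix (Fin (d (i + 1))) (Fin (d i)) ℝ)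
       (b : ∀ i : ℕ, Fin (d (i + 1)) → ℝ),
      (∀ i ≤ lm, (∀ r c, |W i r c - M i r c| ≤ ε) ∧ (∀ r, |b i r - mv i r| ≤ ε)) ∧
      ∃ x0 ∈ X0, preact d W b x0 lm ∈ Xu) := by
  constructor
  · rintro ⟨x0, xin, hx0, hxu, hlo0, hhi0, hhid⟩
    -- input layer rowwise
    have h0 : ∀ r, ∃ w : Fin (d 0) → ℝ, ∃ β : ℝ,
        (∀ j, |w j - M 0 r j| ≤ ε) ∧ |β - mv 0 r| ≤ ε ∧
        (∑ j, w j * x0 j) + β = xin 0 r := by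
      intro r
      have hl := hlo0 r
      have hh := hhi0 r
      simp only [Pi.add_apply, Pi.sub_apply, Matrix.mulVec, dotProduct,
        Matrix.sub_apply, Matrix.add_apply, Matrix.of_apply] at hl hh
      have e1 := input_row_eq (fun j => M 0 r j) ε x0
      have e2 := input_row_eq' (fun j => M 0 r j) ε x0
      refine rowlem x0 (fun j => M 0 r j) (mv 0 r) ε (xin 0 r) hε ?_ ?_
      · linarith [hl, e1]
      · linarith [hh, e2]
    -- hidden layers rowwise
    have hh : ∀ i, i < lm → ∀ r, ∃ w : Fin (d (i + 1)) → ℝ, ∃ β : ℝ,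
        (∀ j, |w j - M (i + 1) r j| ≤ ε) ∧ |β - mv (i + 1) r| ≤ ε ∧
        (∑ j, w j * relu (xin i) j) + β = xin (i + 1) r := by
      intro i hi r
      obtain ⟨hl, hh⟩ := hhid i hi
      have hl := hl r
      have hh := hh r
      simp only [Pi.add_apply, Pi.sub_apply, Matrix.mulVec, dotProduct,
        Matrix.sub_apply, Matrix.add_apply, Matrix.of_apply] at hl hh
      refine rowlem (relu (xin i)) (fun j => M (i + 1) r j) (mv (i + 1) r) ε
        (xin (i + 1) r) hε ?_ ?_
      · have : ∑ j, (M (i + 1) r j - ε) * relu (xin i) j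
            = ∑ j, M (i + 1) r j * relu (xin i) j - ε * ∑ j, |relu (xin i) j| := by
          rw [Finset.mul_sum, ← Finset.sum_sub_distrib]
          refine Finset.sum_congr rfl fun j _ => ?_
          rw [relu_abs]; ring
        linarith [hl, this]
      · have : ∑ j, (M (i + 1) r j + ε) * relu (xin i) j
            = ∑ j, M (i + 1) r j * relu (xin i) j + ε * ∑ j, |relu (xin i) j| := by
          rw [Finset.mul_sum, ← Finset.sum_add_distrib]
          refine Finset.sum_congr rfl fun j _ => ?_
          rw [relu_abs]; ring
        linarith [hh, this]
    choose w0 β0 hw0 hβ0 heq0 using h0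
    choose wh βh hwh hβh heqh using hh
    refine ⟨fun i => Nat.casesOn i (fun r c => w0 r c)
        (fun j => if h : j < lm then (fun r c => wh j h r c) else M (j + 1)),
      fun i => Nat.casesOn i (fun r => β0 r)
        (fun j => if h : j < lm then (fun r => βh j h r) else mv (j + 1)),
      ?_, x0, hx0, ?_⟩
    · intro i hi
      cases i with
      | zero => exact ⟨fun r c => hw0 r c, fun r => hβ0 r⟩
      | succ j =>
        have hj : j < lm := hi
        simp only [dif_pos hj]
        exact ⟨fun r c => by simp only [hj, ↓reduceDIte]; exact hwh j hj r c, fun r => hβh j hj r⟩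
    · -- preact = xin
      have hpre : ∀ i, i ≤ lm → preact d
          (fun i => Nat.casesOn i (fun r c => w0 r c)
            (fun j => if h : j < lm then (fun r c => wh j h r c) else M (j + 1)))
          (fun i => Nat.casesOn i (fun r => β0 r)
            (fun j => if h : j < lm then (fun r => βh j h r) else mv (j + 1)))
          x0 i = xin i := by
        intro i
        induction i with
        | zero =>
          intro _
          funext r
          show (Matrix.mulVec (fun r c => w0 r c) x0 + fun r => β0 r) r = xin 0 r
          simp only [Pi.add_apply, Matrix.mulVec, dotProduct]
          exact heq0 r
        | succ j ih =>
          intro hj'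
          have hj : j < lm := hj'
          funext r
          show (Matrix.mulVec _ (relu (preact _ _ _ x0 j)) + _) r = xin (j + 1) r
          rw [ih (le_of_lt hj)]
          simp only [dif_pos hj, Pi.add_apply, Matrix.mulVec, dotProduct]
          simp only [hj, ↓reduceDIte]
          exact heqh j hj r
      rw [hpre lm le_rfl]
      exact hxu
  · rintro ⟨W, b, hbox, x0, hx0, hxu⟩
    refine ⟨x0, fun i => preact d W b x0 i, hx0, hxu, ?_, ?_, ?_⟩
    · intro r
      obtain ⟨hW, hb⟩ := hbox 0 (Nat.zero_le _)
      have hr := (row_bounds (fun j => W 0 r j) (fun j => M 0 r j) x0 (b 0 r)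
        (mv 0 r) ε (fun j => hW r j) (hb r)).1
      have e1 := input_row_eq (fun j => M 0 r j) ε x0
      simp only [Pi.add_apply, Pi.sub_apply, Matrix.mulVec, dotProduct,
        Matrix.sub_apply, Matrix.add_apply, Matrix.of_apply, preact]
      linarith [hr, e1]
    · intro r
      obtain ⟨hW, hb⟩ := hbox 0 (Nat.zero_le _)
      have hr := (row_bounds (fun j => W 0 r j) (fun j => M 0 r j) x0 (b 0 r)
        (mv 0 r) ε (fun j => hW r j) (hb r)).2
      have e2 := input_row_eq' (fun j => M 0 r j) ε x0
      simp only [Pi.add_apply, Pi.sub_apply, Matrix.mulVec, dotProduct,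
        Matrix.sub_apply, Matrix.add_apply, Matrix.of_apply, preact]
      linarith [hr, e2]
    · intro i hi
      obtain ⟨hW, hb⟩ := hbox (i + 1) hi
      constructor <;> intro r
      · have hr := (row_bounds (fun j => W (i + 1) r j) (fun j => M (i + 1) r j)
          (relu (preact d W b x0 i)) (b (i + 1) r) (mv (i + 1) r) ε
          (fun j => hW r j) (hb r)).1
        have e : ∑ j, (M (i + 1) r j - ε) * relu (preact d W b x0 i) j
            = ∑ j, M (i + 1) r j * relu (preact d W b x0 i) j
              - ε * ∑ j, |relu (preact d W b x0 i) j| := by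
          rw [Finset.mul_sum, ← Finset.sum_sub_distrib]
          refine Finset.sum_congr rfl fun j _ => ?_
          rw [relu_abs]; ring
        simp only [Pi.add_apply, Pi.sub_apply, Matrix.mulVec, dotProduct,
          Matrix.sub_apply, Matrix.add_apply, Matrix.of_apply, preact]
        linarith [hr, e]
      · have hr := (row_bounds (fun j => W (i + 1) r j) (fun j => M (i + 1) r j)
          (relu (preact d W b x0 i)) (b (i + 1) r) (mv (i + 1) r) ε
          (fun j => hW r j) (hb r)).2
        have e : ∑ j, (M (i + 1) r j + ε) * relu (preact d W b x0 i) j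
            = ∑ j, M (i + 1) r j * relu (preact d W b x0 i) j
              + ε * ∑ j, |relu (preact d W b x0 i) j| := by
          rw [Finset.mul_sum, ← Finset.sum_add_distrib]
          refine Finset.sum_congr rfl fun j _ => ?_
          rw [relu_abs]; ring
        simp only [Pi.add_apply, Pi.sub_apply, Matrix.mulVec, dotProduct,
          Matrix.sub_apply, Matrix.add_apply, Matrix.of_apply, preact]
        linarith [hr, e]
end
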